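/- (Muckenhoupt weighted maximal inequality for power weights.) Suppose 1 < p < ∞ and −1 < a < p − 1. Then there exists a constant C such that ‖ 𝓜f ‖_{L^p(ℝ, |t|^a dt)} ≤ C ‖ f ‖_{L^p(ℝ, |t|^a dt)} for all f ∈ L^p(ℝ, |t|^a dt), where 𝓜 is the Hardy–Littlewood maximal operator on ℝ. -/

import Mathlib

/-!
For `q > 1` the weight `|t| ^ a` is a Muckenhoupt `A_q` weight as soon as `-1 < a < q - 1`: on a
ball `B` of radius `σ` around `x`, the integrals of `|t| ^ a` and of the dual weight
`|t| ^ (-a / (q - 1))` over `B` are bounded by `σ` times the corresponding power of `max |x| σ`,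
and these powers cancel. Hölder's inequality turns the `A_q` bound into a weighted estimate on each
ball where `g` has large average, and the Vitali covering lemma sums these into the weighted weak
type `(q, q)` inequality for the maximal operator. Since `a < p - 1`, one can pick such a `q < p`;
splitting `g` at height `s / 2` and using `𝓜 (g + c) ≤ 𝓜 g + c`, the weak type bound at all levels
`s` integrates (layer cake formula) to the strong type `(p, p)` inequality.
-/

open MeasureTheory Set
open scoped ENNReal NNReal

/-- The Hardy–Littlewood maximal operator on `ℝ`:
`(𝓜 f)(t) = sup_{σ>0} (1/(2σ)) ∫_{t-σ}^{t+σ} |f(η)| dη`. -/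
noncomputable def maxHL (f : ℝ → ℝ) (t : ℝ) : ℝ≥0∞ :=
  ⨆ (σ : ℝ) (_ : 0 < σ),
    (ENNReal.ofReal (2 * σ))⁻¹ * ∫⁻ η in Ioo (t - σ) (t + σ), (‖f η‖₊ : ℝ≥0∞)

open Metric Filter Topology

/-! ### The layer cake formula -/

theorem lintegral_Ioo_rpow {e T : ℝ} (he : -1 < e) (hT : 0 ≤ T) :
    ∫⁻ s in Ioo 0 T, ENNReal.ofReal (s ^ e) = ENNReal.ofReal (T ^ (e + 1) / (e + 1)) := by
  have hint : IntegrableOn (fun s : ℝ => s ^ e) (Ioo 0 T) :=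
    (intervalIntegrable_iff_integrableOn_Ioo_of_le hT).1
      (intervalIntegral.intervalIntegrable_rpow' he)
  rw [← ofReal_integral_eq_lintegral_ofReal hint
      (ae_restrict_of_forall_mem measurableSet_Ioo fun s hs => Real.rpow_nonneg hs.1.le e),
    integral_Ioc_eq_integral_Ioo.symm, ← intervalIntegral.integral_of_le hT,
    integral_rpow (Or.inl he), Real.zero_rpow (by linarith), sub_zero]

theorem lintegral_Ioi_rpow_eq_top (e : ℝ) : ∫⁻ s in Ioi 0, ENNReal.ofReal (s ^ e) = ∞ := by
  by_contra h
  refine not_integrableOn_Ioi_rpow e ⟨(measurable_id.pow_const e).aestronglyMeasurable, ?_⟩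
  rw [hasFiniteIntegral_iff_ofReal
    (ae_restrict_of_forall_mem measurableSet_Ioi fun s hs => Real.rpow_nonneg (le_of_lt hs) e)]
  exact lt_top_iff_ne_top.2 h

theorem lintegral_Ioi_indicator_rpow {e : ℝ} (he : -1 < e) (y : ℝ≥0∞) :
    ∫⁻ s in Ioi 0, {s : ℝ | ENNReal.ofReal s < y}.indicator (fun s => ENNReal.ofReal (s ^ e)) s
      = y ^ (e + 1) / ENNReal.ofReal (e + 1) := by
  have he1 : 0 < e + 1 := by linarith
  rw [lintegral_indicator (measurableSet_lt ENNReal.measurable_ofReal measurable_const),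
    Measure.restrict_restrict (measurableSet_lt ENNReal.measurable_ofReal measurable_const)]
  rcases eq_or_ne y ∞ with rfl | hy
  · simp only [ENNReal.ofReal_lt_top, ofPred_true, univ_inter, lintegral_Ioi_rpow_eq_top,
      ENNReal.top_rpow_of_pos he1]
    exact (ENNReal.top_div_of_ne_top ENNReal.ofReal_ne_top).symm
  · have hset : {s : ℝ | ENNReal.ofReal s < y} ∩ Ioi 0 = Ioo 0 y.toReal := by
      ext s
      simp only [mem_inter_iff, mem_ofPred_eq, mem_Ioi, mem_Ioo]
      rw [← ENNReal.ofReal_toReal hy, ENNReal.ofReal_lt_ofReal_iff', ENNReal.ofReal_toReal hy]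
      constructor
      · rintro ⟨⟨h, -⟩, h0⟩; exact ⟨h0, h⟩
      · rintro ⟨h0, h⟩; exact ⟨⟨h, h0.trans h⟩, h0⟩
    rw [hset, lintegral_Ioo_rpow he ENNReal.toReal_nonneg, ENNReal.ofReal_div_of_pos he1,
      ← ENNReal.ofReal_rpow_of_nonneg ENNReal.toReal_nonneg he1.le, ENNReal.ofReal_toReal hy]

theorem measurable_uncurry_indicator_ofReal_lt {α : Type*} [MeasurableSpace α]
    {h : α → ℝ≥0∞} (hh : Measurable h) {F : ℝ → ℝ≥0∞} (hF : Measurable F) :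
    Measurable (Function.uncurry fun x s => {s : ℝ | ENNReal.ofReal s < h x}.indicator F s) := by
  have hset : MeasurableSet {z : α × ℝ | ENNReal.ofReal z.2 < h z.1} :=
    measurableSet_lt measurable_snd.ennreal_ofReal (hh.comp measurable_fst)
  change Measurable fun z : α × ℝ => {s : ℝ | ENNReal.ofReal s < h z.1}.indicator F z.2
  simp only [indicator_apply, mem_ofPred_eq]
  exact Measurable.ite hset (hF.comp measurable_snd) measurable_const

theorem lintegral_rpow_eq_lintegral_meas_ofReal_lt_mul {α : Type*} [MeasurableSpace α]
    (μ : Measure α) [SFinite μ] {h : α → ℝ≥0∞} (hh : Measurable h) {p : ℝ} (hp : 0 < p) :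
    ∫⁻ x, h x ^ p ∂μ = ENNReal.ofReal p *
      ∫⁻ s in Ioi 0, μ {x | ENNReal.ofReal s < h x} * ENNReal.ofReal (s ^ (p - 1)) := by
  have hslice : ∀ x, h x ^ p = ENNReal.ofReal p * ∫⁻ s in Ioi 0,
      {s : ℝ | ENNReal.ofReal s < h x}.indicator (fun s => ENNReal.ofReal (s ^ (p - 1))) s := by
    intro x
    rw [lintegral_Ioi_indicator_rpow (by linarith), sub_add_cancel,
      ENNReal.mul_div_cancel (by simpa using hp) ENNReal.ofReal_ne_top]
  simp_rw [hslice]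
  rw [lintegral_const_mul' _ _ ENNReal.ofReal_ne_top, lintegral_lintegral_swap
    (measurable_uncurry_indicator_ofReal_lt hh
      (by fun_prop : Measurable fun s : ℝ => ENNReal.ofReal (s ^ (p - 1)))).aemeasurable]
  congr 1
  refine setLIntegral_congr_fun measurableSet_Ioi fun s _ => ?_
  rw [mul_comm, ← lintegral_indicator_const (measurableSet_lt measurable_const hh)]
  congr 1 with x

/-! ### From weak type `(q, q)` to strong type `(p, p)` -/

section Interpolation

variable {α : Type*} [MeasurableSpace α] {μ : Measure α} {T : (α → ℝ≥0∞) → α → ℝ≥0∞}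
  {p q : ℝ} {C : ℝ≥0∞}

theorem meas_lt_mul_rpow_le_of_weakType (hmono : Monotone T)
    (hconst : ∀ (g : α → ℝ≥0∞) (c : ℝ≥0∞), T (fun x => g x + c) ≤ fun x => T g x + c)
    (hweak : ∀ g, Measurable g → ∀ c : ℝ≥0∞, μ {x | c < T g x} * c ^ q ≤ C * ∫⁻ x, g x ^ q ∂μ)
    (hq : 0 < q) {g : α → ℝ≥0∞} (hg : Measurable g) {s : ℝ} (hs : 0 < s) :
    μ {x | ENNReal.ofReal s < T g x} * ENNReal.ofReal (s ^ (p - 1))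
      ≤ 2 ^ q * C * (∫⁻ x, {x | ENNReal.ofReal s < 2 * g x}.indicator (fun x => g x ^ q) x ∂μ)
        * ENNReal.ofReal (s ^ (p - 1 - q)) := by
  set c := ENNReal.ofReal s / 2
  set E := {x | ENNReal.ofReal s < 2 * g x}
  have hE : MeasurableSet E := measurableSet_lt measurable_const (measurable_const.mul hg)
  -- only the part of `g` above `c` matters at level `2 c`
  have hsplit : T g ≤ fun x => T (E.indicator g) x + c := by
    refine (hmono fun x => ?_).trans (hconst _ _)
    by_cases hx : x ∈ E
    · simp [indicator_of_mem hx]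
    · rw [indicator_of_notMem hx, zero_add, ENNReal.le_div_iff_mul_le (Or.inl two_ne_zero)
        (Or.inl ENNReal.ofNat_ne_top), mul_comm]
      exact not_lt.1 hx
  have hlevel : {x | ENNReal.ofReal s < T g x} ⊆ {x | c < T (E.indicator g) x} := fun x hx => by
    rw [mem_ofPred_eq, ← ENNReal.add_lt_add_iff_right (ENNReal.div_ne_top ENNReal.ofReal_ne_top
      two_ne_zero), ENNReal.add_halves]
    exact hx.trans_le (hsplit x)
  have hpow : (fun x => E.indicator g x ^ q) = E.indicator fun x => g x ^ q := by
    ext x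
    by_cases hx : x ∈ E <;> simp [hx, ENNReal.zero_rpow_of_pos hq]
  have hweight : ENNReal.ofReal (s ^ (p - 1))
      = c ^ q * (2 ^ q * ENNReal.ofReal (s ^ (p - 1 - q))) := by
    rw [← mul_assoc, ← ENNReal.mul_rpow_of_nonneg _ _ hq.le,
      ENNReal.div_mul_cancel two_ne_zero ENNReal.ofNat_ne_top,
      ENNReal.ofReal_rpow_of_nonneg hs.le hq.le, ← ENNReal.ofReal_mul (Real.rpow_nonneg hs.le q),
      ← Real.rpow_add hs, add_sub_cancel]
  calc μ {x | ENNReal.ofReal s < T g x} * ENNReal.ofReal (s ^ (p - 1))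
      ≤ μ {x | c < T (E.indicator g) x} * c ^ q * (2 ^ q * ENNReal.ofReal (s ^ (p - 1 - q))) := by
        rw [hweight, ← mul_assoc]
        gcongr
    _ ≤ C * (∫⁻ x, E.indicator g x ^ q ∂μ) * (2 ^ q * ENNReal.ofReal (s ^ (p - 1 - q))) :=
        mul_le_mul_left (hweak _ (hg.indicator hE) c) _
    _ = _ := by
        rw [hpow]
        ring

theorem lintegral_rpow_le_of_weakType [SFinite μ]
    (hmeas : ∀ g, Measurable g → Measurable (T g)) (hmono : Monotone T)
    (hconst : ∀ (g : α → ℝ≥0∞) (c : ℝ≥0∞), T (fun x => g x + c) ≤ fun x => T g x + c)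
    (hweak : ∀ g, Measurable g → ∀ c : ℝ≥0∞, μ {x | c < T g x} * c ^ q ≤ C * ∫⁻ x, g x ^ q ∂μ)
    (hq : 0 < q) (hqp : q < p) {g : α → ℝ≥0∞} (hg : Measurable g) :
    ∫⁻ x, T g x ^ p ∂μ ≤ 2 ^ p * ENNReal.ofReal (p / (p - q)) * C * ∫⁻ x, g x ^ p ∂μ := by
  set G : α → ℝ → ℝ≥0∞ := fun x s =>
    {s : ℝ | ENNReal.ofReal s < 2 * g x}.indicator (fun s => ENNReal.ofReal (s ^ (p - 1 - q))) s
  have hG : Measurable (Function.uncurry fun x s => g x ^ q * G x s) :=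
    ((hg.pow_const q).comp measurable_fst).mul (measurable_uncurry_indicator_ofReal_lt
      (measurable_const.mul hg) (measurable_id.pow_const (p - 1 - q)).ennreal_ofReal)
  have hswap : ∀ s x, {x | ENNReal.ofReal s < 2 * g x}.indicator (fun x => g x ^ q) x
      * ENNReal.ofReal (s ^ (p - 1 - q)) = g x ^ q * G x s := fun s x => by
    simp only [G, indicator_apply, mem_ofPred_eq]
    split_ifs <;> simp
  have hinner : ∀ x, ∫⁻ s in Ioi 0, g x ^ q * G x s
      = 2 ^ (p - q) / ENNReal.ofReal (p - q) * g x ^ p := fun x => by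
    rw [lintegral_const_mul _ (Measurable.indicator (by fun_prop)
      (measurableSet_lt ENNReal.measurable_ofReal measurable_const)),
      lintegral_Ioi_indicator_rpow (by linarith), show p - 1 - q + 1 = p - q by ring,
      ENNReal.mul_rpow_of_nonneg _ _ (by linarith), ← add_sub_cancel q p,
      ENNReal.rpow_add_of_nonneg _ _ hq.le (by linarith), add_sub_cancel_left, div_eq_mul_inv,
      div_eq_mul_inv]
    ring
  have h2p : (2 : ℝ≥0∞) ^ p = 2 ^ q * 2 ^ (p - q) := by
    rw [← ENNReal.rpow_add _ _ two_ne_zero ENNReal.ofNat_ne_top, add_sub_cancel]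
  calc ∫⁻ x, T g x ^ p ∂μ
      = ENNReal.ofReal p *
          ∫⁻ s in Ioi 0, μ {x | ENNReal.ofReal s < T g x} * ENNReal.ofReal (s ^ (p - 1)) :=
        lintegral_rpow_eq_lintegral_meas_ofReal_lt_mul μ (hmeas g hg) (hq.trans hqp)
    _ ≤ ENNReal.ofReal p * ∫⁻ s in Ioi 0, 2 ^ q * C * ∫⁻ x, g x ^ q * G x s ∂μ := by
        refine mul_le_mul_right (setLIntegral_mono' measurableSet_Ioi fun s hs => ?_) _
        refine (meas_lt_mul_rpow_le_of_weakType hmono hconst hweak hq hg hs).trans_eq ?_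
        rw [mul_assoc, ← lintegral_mul_const' _ _ ENNReal.ofReal_ne_top]
        simp_rw [hswap]
    _ = ENNReal.ofReal p * (2 ^ q * C * ∫⁻ x, (∫⁻ s in Ioi 0, g x ^ q * G x s) ∂μ) := by
        rw [lintegral_const_mul _ hG.lintegral_prod_left, lintegral_lintegral_swap hG.aemeasurable]
    _ = 2 ^ p * ENNReal.ofReal (p / (p - q)) * C * ∫⁻ x, g x ^ p ∂μ := by
        simp_rw [hinner]
        rw [lintegral_const_mul' _ _ (ENNReal.div_ne_top (ENNReal.rpow_ne_top_of_nonneg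
          (by linarith) ENNReal.ofNat_ne_top) (by simpa using hqp)),
          ENNReal.ofReal_div_of_pos (by linarith), h2p, div_eq_mul_inv, div_eq_mul_inv]
        ring

end Interpolation

/-! ### Hölder's inequality against a weight and the Vitali covering argument -/

theorem rpow_lintegral_le_lintegral_rpow_mul_weight {α : Type*} [MeasurableSpace α]
    {μ : Measure α} {q : ℝ} (hq : 1 < q) {g w : α → ℝ≥0∞} (hg : AEMeasurable g μ)
    (hw : AEMeasurable w μ) (hw0 : ∀ᵐ x ∂μ, w x ≠ 0) (hwt : ∀ᵐ x ∂μ, w x ≠ ∞) :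
    (∫⁻ x, g x ∂μ) ^ q
      ≤ (∫⁻ x, g x ^ q * w x ∂μ) * (∫⁻ x, w x ^ (-(q - 1)⁻¹) ∂μ) ^ (q - 1) := by
  have hq0 : 0 < q := by linarith
  -- Hölder with exponents `q` and `q / (q - 1)` for `g = (g w ^ (1 / q)) * w ^ (-1 / q)`
  have hsplit : ∫⁻ x, g x ∂μ
      = ∫⁻ x, ((g * fun x => w x ^ q⁻¹) * fun x => w x ^ (-q⁻¹)) x ∂μ := by
    refine lintegral_congr_ae ?_
    filter_upwards [hw0, hwt] with x h0 ht
    rw [Pi.mul_apply, Pi.mul_apply, mul_assoc, ← ENNReal.rpow_add _ _ h0 ht, add_neg_cancel,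
      ENNReal.rpow_zero, mul_one]
  have hfirst : ∀ x, (g * fun x => w x ^ q⁻¹) x ^ q = g x ^ q * w x := fun x => by
    rw [Pi.mul_apply, ENNReal.mul_rpow_of_nonneg _ _ hq0.le, ← ENNReal.rpow_mul,
      inv_mul_cancel₀ hq0.ne', ENNReal.rpow_one]
  have hsecond : ∀ x, (w x ^ (-q⁻¹)) ^ q.conjExponent = w x ^ (-(q - 1)⁻¹) := fun x => by
    rw [← ENNReal.rpow_mul, Real.conjExponent]
    congr 1
    field_simp
  have hHolder := ENNReal.lintegral_mul_le_Lp_mul_Lq μ (.conjExponent hq)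
    (hg.mul (hw.pow_const q⁻¹)) (hw.pow_const (-q⁻¹))
  rw [← hsplit] at hHolder
  simp_rw [hfirst, hsecond] at hHolder
  calc (∫⁻ x, g x ∂μ) ^ q
      ≤ ((∫⁻ x, g x ^ q * w x ∂μ) ^ (1 / q)
          * (∫⁻ x, w x ^ (-(q - 1)⁻¹) ∂μ) ^ (1 / q.conjExponent)) ^ q :=
        ENNReal.rpow_le_rpow hHolder hq0.le
    _ = (∫⁻ x, g x ^ q * w x ∂μ) * (∫⁻ x, w x ^ (-(q - 1)⁻¹) ∂μ) ^ (q - 1) := by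
        rw [ENNReal.mul_rpow_of_nonneg _ _ hq0.le, ← ENNReal.rpow_mul, ← ENNReal.rpow_mul,
          one_div_mul_cancel hq0.ne', ENNReal.rpow_one, Real.conjExponent]
        congr 2
        field_simp

theorem measure_le_mul_of_forall_exists_closedBall {α : Type*} [PseudoMetricSpace α]
    [TopologicalSpace.SeparableSpace α] [MeasurableSpace α] [OpensMeasurableSpace α]
    {μ ν : Measure α} {c : ℝ≥0∞} {E : Set α} {τ : ℝ} (hτ : 3 < τ)
    (h : ∀ x ∈ E, ∃ r > 0, μ (closedBall x (τ * r)) ≤ c * ν (closedBall x r)) :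
    μ E ≤ c * ν univ := by
  choose! r hr hball using h
  -- Vitali needs bounded radii, so exhaust `E` by the points whose radius is at most `N`
  set E' : ℕ → Set α := fun N => {x ∈ E | r x ≤ N}
  have hE : E = ⋃ N, E' N := by
    ext x
    simp only [mem_iUnion]
    exact ⟨fun hx => (exists_nat_ge (r x)).imp fun N hN => ⟨hx, hN⟩, fun ⟨_, hx, _⟩ => hx⟩
  have hmono : Monotone E' := fun M N hMN x hx => ⟨hx.1, hx.2.trans (by exact_mod_cast hMN)⟩
  rw [hE, hmono.directed_le.measure_iUnion]
  refine iSup_le fun N => ?_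
  obtain ⟨u, huE, hdisj, hcov⟩ := Vitali.exists_disjoint_subfamily_covering_enlargement_closedBall
    (E' N) id r N (fun x hx => hx.2) τ hτ
  simp only [id] at hdisj hcov
  have hu : u.Countable := hdisj.countable_of_nonempty_interior fun y hy =>
    (nonempty_ball.2 (hr y (huE hy).1)).mono (interior_maximal ball_subset_closedBall isOpen_ball)
  have hsub : E' N ⊆ ⋃ y ∈ u, closedBall y (τ * r y) := fun x hx => by
    obtain ⟨y, hy, hxy⟩ := hcov x hx
    exact mem_biUnion hy (hxy (mem_closedBall_self (hr x hx.1).le))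
  calc μ (E' N)
      ≤ ∑' y : u, μ (closedBall y (τ * r y)) :=
        (measure_mono hsub).trans (measure_biUnion_le μ hu _)
    _ ≤ ∑' y : u, c * ν (closedBall y (r y)) := ENNReal.tsum_le_tsum fun y => hball y (huE y.2).1
    _ = c * ν (⋃ y ∈ u, closedBall y (r y)) := by
        rw [ENNReal.tsum_mul_left, measure_biUnion hu hdisj fun _ _ => measurableSet_closedBall]
    _ ≤ c * ν univ := by gcongr; exact subset_univ _

/-! ### The maximal operator on `ℝ≥0∞`-valued functions -/

noncomputable def maximalFunction (g : ℝ → ℝ≥0∞) (t : ℝ) : ℝ≥0∞ :=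
  ⨆ (σ : ℝ) (_ : 0 < σ), (ENNReal.ofReal (2 * σ))⁻¹ * ∫⁻ η in Ioo (t - σ) (t + σ), g η

theorem maxHL_eq_maximalFunction (f : ℝ → ℝ) : maxHL f = maximalFunction fun t => ‖f t‖₊ := rfl

theorem monotone_maximalFunction : Monotone maximalFunction := fun _ _ hgh _ =>
  iSup₂_mono fun _ _ => mul_le_mul_right (lintegral_mono fun η => hgh η) _

theorem maximalFunction_add_const_le (g : ℝ → ℝ≥0∞) (c : ℝ≥0∞) :
    maximalFunction (fun η => g η + c) ≤ fun t => maximalFunction g t + c := fun t => by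
  refine iSup₂_le fun σ hσ => ?_
  have h2σ : ENNReal.ofReal (2 * σ) ≠ 0 := by simpa using hσ
  rw [lintegral_add_right _ measurable_const, setLIntegral_const, Real.volume_Ioo,
    show t + σ - (t - σ) = 2 * σ by ring, mul_add, mul_left_comm,
    ENNReal.inv_mul_cancel h2σ ENNReal.ofReal_ne_top, mul_one]
  exact add_le_add_left (le_iSup₂_of_le σ hσ le_rfl) c

theorem measurable_setLIntegral_Ioo_sub_add {g : ℝ → ℝ≥0∞} (hg : Measurable g) (σ : ℝ) :
    Measurable fun t => ∫⁻ η in Ioo (t - σ) (t + σ), g η := by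
  set S := {z : ℝ × ℝ | z.1 - σ < z.2 ∧ z.2 < z.1 + σ}
  have hS : MeasurableSet S := (measurableSet_lt (by fun_prop) measurable_snd).inter
    (measurableSet_lt measurable_snd (by fun_prop))
  have h : ∀ t, ∫⁻ η in Ioo (t - σ) (t + σ), g η = ∫⁻ η, S.indicator (g ∘ Prod.snd) (t, η) :=
    fun t => by rw [← lintegral_indicator measurableSet_Ioo]; rfl
  simp_rw [h]
  exact ((hg.comp measurable_snd).indicator hS).lintegral_prod_right'

theorem maximalFunction_eq_iSup_rat (g : ℝ → ℝ≥0∞) (t : ℝ) :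
    maximalFunction g t = ⨆ (ρ : ℚ) (_ : (0 : ℝ) < ρ),
      (ENNReal.ofReal (2 * ρ))⁻¹ * ∫⁻ η in Ioo (t - ρ) (t + ρ), g η := by
  refine le_antisymm (iSup₂_le fun σ hσ => ?_)
    (iSup₂_le fun ρ hρ => le_iSup₂_of_le (ρ : ℝ) hρ le_rfl)
  -- approximate `σ` from above by rationals: the integral only grows, the normalisation converges
  have hρ : ∀ n : ℕ, ∃ ρ : ℚ, σ < ρ ∧ (ρ : ℝ) < σ + 1 / (n + 1) := fun n =>
    exists_rat_btwn (lt_add_of_pos_right σ Nat.one_div_pos_of_nat)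
  choose ρ hρσ hρn using hρ
  have hlim : Tendsto (fun n => (ρ n : ℝ)) atTop (𝓝 σ) :=
    tendsto_of_tendsto_of_tendsto_of_le_of_le tendsto_const_nhds
      (by simpa using tendsto_one_div_add_atTop_nhds_zero_nat.const_add σ)
      (fun n => (hρσ n).le) (fun n => (hρn n).le)
  have hnorm : Tendsto (fun n => (ENNReal.ofReal (2 * ρ n))⁻¹ * ∫⁻ η in Ioo (t - σ) (t + σ), g η)
      atTop (𝓝 ((ENNReal.ofReal (2 * σ))⁻¹ * ∫⁻ η in Ioo (t - σ) (t + σ), g η)) :=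
    ENNReal.Tendsto.mul_const (tendsto_inv_iff.2 (ENNReal.tendsto_ofReal (hlim.const_mul 2)))
      (Or.inl (ENNReal.inv_ne_zero.2 ENNReal.ofReal_ne_top))
  refine le_of_tendsto' hnorm fun n => le_iSup₂_of_le (ρ n) (hσ.trans (hρσ n)) ?_
  gcongr <;> exact (hρσ n).le

theorem measurable_maximalFunction {g : ℝ → ℝ≥0∞} (hg : Measurable g) :
    Measurable (maximalFunction g) := by
  simp_rw [funext (maximalFunction_eq_iSup_rat g)]
  exact .iSup fun ρ => .iSup fun _ => (measurable_setLIntegral_Ioo_sub_add hg ρ).const_mul _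

/-! ### The power weight `|t| ^ a` -/

noncomputable def powerWeight (a : ℝ) : Measure ℝ :=
  volume.withDensity fun t => ENNReal.ofReal (|t| ^ a)

instance (a : ℝ) : SFinite (powerWeight a) := by
  unfold powerWeight
  infer_instance

theorem setLIntegral_powerWeight (a : ℝ) {s : Set ℝ} (hs : MeasurableSet s) (F : ℝ → ℝ≥0∞) :
    ∫⁻ t in s, F t ∂powerWeight a = ∫⁻ t in s, F t * ENNReal.ofReal (|t| ^ a) := by
  rw [powerWeight, restrict_withDensity hs, lintegral_withDensity_eq_lintegral_mul_non_measurable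
    _ (by fun_prop) (ae_of_all _ fun _ => ENNReal.ofReal_lt_top)]
  simp_rw [Pi.mul_apply, mul_comm]

theorem lintegral_powerWeight (a : ℝ) (F : ℝ → ℝ≥0∞) :
    ∫⁻ t, F t ∂powerWeight a = ∫⁻ t, F t * ENNReal.ofReal (|t| ^ a) := by
  simpa using setLIntegral_powerWeight a MeasurableSet.univ F

theorem lintegral_comp_abs (F : ℝ → ℝ≥0∞) : ∫⁻ t, F |t| = 2 * ∫⁻ t in Ioi 0, F t := by
  have hpos : ∫⁻ t in Ioi 0, F |t| = ∫⁻ t in Ioi 0, F t :=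
    setLIntegral_congr_fun measurableSet_Ioi fun t ht => by rw [abs_of_pos ht]
  have hneg : ∫⁻ t in Iic 0, F |t| = ∫⁻ t in Ioi 0, F |t| := by
    rw [← lintegral_indicator measurableSet_Iic, ← lintegral_neg_eq_self,
      setLIntegral_congr Ioi_ae_eq_Ici, ← lintegral_indicator measurableSet_Ici]
    congr 1 with t
    simp [indicator_apply]
  rw [← lintegral_add_compl _ (measurableSet_Ioi (a := (0 : ℝ))), compl_Ioi, hneg, hpos, two_mul]

theorem lintegral_ball_zero_abs_rpow {γ R : ℝ} (hγ : -1 < γ) (hR : 0 ≤ R) :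
    ∫⁻ t in ball 0 R, ENNReal.ofReal (|t| ^ γ) = 2 * ENNReal.ofReal (R ^ (γ + 1) / (γ + 1)) := by
  have hball : ∀ t : ℝ, (ball 0 R).indicator (fun t => ENNReal.ofReal (|t| ^ γ)) t
      = (Iio R).indicator (fun u => ENNReal.ofReal (u ^ γ)) |t| := fun t => by
    simp only [indicator, mem_ball, dist_zero_right, Real.norm_eq_abs, mem_Iio]
  rw [← lintegral_indicator measurableSet_ball]
  simp_rw [hball]
  rw [lintegral_comp_abs, lintegral_indicator measurableSet_Iio,
    Measure.restrict_restrict measurableSet_Iio, Iio_inter_Ioi, lintegral_Ioo_rpow hγ hR]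

theorem rpow_le_rpow_abs_mul_rpow_of_le_mul {m k u : ℝ} (γ : ℝ) (hm : 0 < m) (hk : 1 ≤ k)
    (hmu : m ≤ k * u) (hum : u ≤ k * m) : u ^ γ ≤ k ^ |γ| * m ^ γ := by
  have hk0 : 0 < k := by linarith
  have hu : 0 < u := pos_of_mul_pos_right (hm.trans_le hmu) hk0.le
  rcases le_total 0 γ with hγ | hγ
  · calc u ^ γ ≤ (k * m) ^ γ := Real.rpow_le_rpow hu.le hum hγ
      _ = k ^ |γ| * m ^ γ := by rw [abs_of_nonneg hγ, Real.mul_rpow hk0.le hm.le]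
  · calc u ^ γ ≤ (m / k) ^ γ :=
          Real.rpow_le_rpow_of_nonpos (by positivity) ((div_le_iff₀' hk0).2 hmu) hγ
      _ = k ^ |γ| * m ^ γ := by
          rw [abs_of_nonpos hγ, Real.div_rpow hm.le hk0.le, Real.rpow_neg hk0.le, div_eq_inv_mul]

theorem lintegral_closedBall_abs_rpow_le_of_two_mul_le {γ x r : ℝ} (hr : 0 < r)
    (hx : 2 * r ≤ |x|) :
    ∫⁻ t in closedBall x r, ENNReal.ofReal (|t| ^ γ) ≤ ENNReal.ofReal (2 ^ |γ| * 2 * r * |x| ^ γ) := by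
  have hpt : ∀ t ∈ closedBall x r,
      ENNReal.ofReal (|t| ^ γ) ≤ ENNReal.ofReal (2 ^ |γ| * |x| ^ γ) := fun t ht => by
    rw [mem_closedBall, Real.dist_eq] at ht
    refine ENNReal.ofReal_le_ofReal
      (rpow_le_rpow_abs_mul_rpow_of_le_mul γ (by linarith) one_le_two ?_ ?_)
    · linarith [abs_sub_abs_le_abs_sub x t, abs_sub_comm x t]
    · linarith [abs_sub_abs_le_abs_sub t x]
  calc ∫⁻ t in closedBall x r, ENNReal.ofReal (|t| ^ γ)
      ≤ ∫⁻ _ in closedBall x r, ENNReal.ofReal (2 ^ |γ| * |x| ^ γ) :=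
        setLIntegral_mono' measurableSet_closedBall hpt
    _ = ENNReal.ofReal (2 ^ |γ| * 2 * r * |x| ^ γ) := by
        rw [setLIntegral_const, Real.volume_closedBall, ← ENNReal.ofReal_mul (by positivity)]
        ring_nf

theorem lintegral_closedBall_abs_rpow_le {γ : ℝ} (hγ : -1 < γ) :
    ∃ C : ℝ≥0, ∀ (x r : ℝ), 0 < r → ∫⁻ t in closedBall x r, ENNReal.ofReal (|t| ^ γ)
      ≤ ENNReal.ofReal (C * r * max |x| r ^ γ) := by
  have hγ1 : 0 < γ + 1 := by linarith
  refine ⟨(2 ^ |γ| * (2 * 4 ^ (γ + 1) / (γ + 1) + 2)).toNNReal, fun x r hr => ?_⟩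
  rw [Real.coe_toNNReal _ (by positivity)]
  set m := max |x| r
  have hm : 0 < m := hr.trans_le (le_max_right _ _)
  have hmγ : 0 ≤ 2 ^ |γ| * m ^ γ := by positivity
  have hA : 0 ≤ 2 * 4 ^ (γ + 1) / (γ + 1) * r := by positivity
  rcases le_or_gt |x| (2 * r) with hnear | hfar
  · -- the ball lies in `ball 0 (4 r)`, where the weight integrates to a multiple of `r ^ (γ + 1)`
    have hsub : closedBall x r ⊆ ball 0 (4 * r) := fun t ht => by
      rw [mem_closedBall, Real.dist_eq] at ht
      rw [mem_ball_zero_iff, Real.norm_eq_abs]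
      linarith [abs_sub_abs_le_abs_sub t x]
    have hrm : r ^ γ ≤ 2 ^ |γ| * m ^ γ :=
      rpow_le_rpow_abs_mul_rpow_of_le_mul γ hm one_le_two (max_le (by linarith) (by linarith))
        (by linarith [le_max_right |x| r])
    calc ∫⁻ t in closedBall x r, ENNReal.ofReal (|t| ^ γ)
        ≤ ∫⁻ t in ball 0 (4 * r), ENNReal.ofReal (|t| ^ γ) := lintegral_mono_set hsub
      _ = ENNReal.ofReal (2 * 4 ^ (γ + 1) / (γ + 1) * r * r ^ γ) := by
          rw [lintegral_ball_zero_abs_rpow hγ (by linarith), ← ENNReal.ofReal_ofNat 2,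
            ← ENNReal.ofReal_mul zero_le_two, Real.mul_rpow (by norm_num) hr.le,
            Real.rpow_add_one hr.ne']
          ring_nf
      _ ≤ ENNReal.ofReal (2 ^ |γ| * (2 * 4 ^ (γ + 1) / (γ + 1) + 2) * r * m ^ γ) :=
          ENNReal.ofReal_le_ofReal (by nlinarith)
  · have hmx : m = |x| := max_eq_left (by linarith)
    refine (lintegral_closedBall_abs_rpow_le_of_two_mul_le hr hfar.le).trans
      (ENNReal.ofReal_le_ofReal ?_)
    rw [← hmx]
    nlinarith

theorem powerWeight_closedBall_mul_le {a : ℝ} (ha : -1 < a) :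
    ∃ C : ℝ≥0, ∀ (x σ k : ℝ), 0 < σ → 1 ≤ k → powerWeight a (closedBall x (k * σ))
      ≤ ENNReal.ofReal (C * k ^ (1 + |a|) * σ * max |x| σ ^ a) := by
  obtain ⟨C, hC⟩ := lintegral_closedBall_abs_rpow_le ha
  refine ⟨C, fun x σ k hσ hk => ?_⟩
  have hk0 : 0 < k := by linarith
  rw [powerWeight, withDensity_apply _ measurableSet_closedBall]
  refine (hC x (k * σ) (by positivity)).trans (ENNReal.ofReal_le_ofReal ?_)
  have hdil : max |x| (k * σ) ^ a ≤ k ^ |a| * max |x| σ ^ a :=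
    rpow_le_rpow_abs_mul_rpow_of_le_mul a (hσ.trans_le (le_max_right _ _)) hk
      ((max_le_max le_rfl (le_mul_of_one_le_left hσ.le hk)).trans
        (le_mul_of_one_le_left ((abs_nonneg x).trans (le_max_left _ _)) hk))
      (max_le ((le_mul_of_one_le_left (abs_nonneg x) hk).trans
        (mul_le_mul_of_nonneg_left (le_max_left _ _) hk0.le))
        (mul_le_mul_of_nonneg_left (le_max_right _ _) hk0.le))
  rw [Real.rpow_add hk0, Real.rpow_one]
  calc (C : ℝ) * (k * σ) * max |x| (k * σ) ^ a ≤ C * (k * σ) * (k ^ |a| * max |x| σ ^ a) := by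
        gcongr
    _ = C * (k * k ^ |a|) * σ * max |x| σ ^ a := by ring

theorem powerWeight_closedBall_mul_dual_le {a q : ℝ} (ha : -1 < a) (hq : 1 < q)
    (haq : a < q - 1) :
    ∃ K : ℝ≥0, ∀ (x σ : ℝ), 0 < σ → powerWeight a (closedBall x (5 * σ))
      * (∫⁻ t in closedBall x σ, ENNReal.ofReal (|t| ^ a) ^ (-(q - 1)⁻¹)) ^ (q - 1)
      ≤ K * ENNReal.ofReal σ ^ q := by
  have hq1 : 0 < q - 1 := by linarith
  set β := -(a / (q - 1))
  have hβ : -1 < β := by linarith [(div_lt_one hq1).2 haq]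
  obtain ⟨Ca, hCa⟩ := powerWeight_closedBall_mul_le ha
  obtain ⟨Cb, hCb⟩ := lintegral_closedBall_abs_rpow_le hβ
  refine ⟨Ca * 5 ^ (1 + |a|) * Cb ^ (q - 1), fun x σ hσ => ?_⟩
  set m := max |x| σ
  have hm : 0 < m := hσ.trans_le (le_max_right _ _)
  have hσq : σ ^ q = σ * σ ^ (q - 1) := by
    rw [← Real.rpow_one_add' hσ.le (by linarith), add_sub_cancel]
  have hdual : ∫⁻ t in closedBall x σ, ENNReal.ofReal (|t| ^ a) ^ (-(q - 1)⁻¹)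
      = ∫⁻ t in closedBall x σ, ENNReal.ofReal (|t| ^ β) := by
    refine lintegral_congr_ae (ae_restrict_of_ae ?_)
    filter_upwards [Measure.ae_ne volume 0] with t ht
    rw [ENNReal.ofReal_rpow_of_pos (by positivity), ← Real.rpow_mul (abs_nonneg t)]
    congr 2
    ring
  have hdual_le : (∫⁻ t in closedBall x σ, ENNReal.ofReal (|t| ^ a) ^ (-(q - 1)⁻¹)) ^ (q - 1)
      ≤ ENNReal.ofReal ((Cb * σ * m ^ β) ^ (q - 1)) := by
    rw [hdual, ← ENNReal.ofReal_rpow_of_nonneg (by positivity) hq1.le]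
    exact ENNReal.rpow_le_rpow (hCb x σ hσ) hq1.le
  calc _ ≤ ENNReal.ofReal (Ca * 5 ^ (1 + |a|) * σ * m ^ a)
        * ENNReal.ofReal ((Cb * σ * m ^ β) ^ (q - 1)) :=
        mul_le_mul' (hCa x σ 5 hσ (by norm_num)) hdual_le
    _ = ENNReal.ofReal (Ca * 5 ^ (1 + |a|) * Cb ^ (q - 1) * σ ^ q) := by
        rw [← ENNReal.ofReal_mul (by positivity)]
        congr 1
        -- the powers of `m` cancel since `a + β (q - 1) = 0`
        rw [Real.mul_rpow (by positivity) (by positivity), Real.mul_rpow (by positivity) hσ.le,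
          ← Real.rpow_mul hm.le, show β * (q - 1) = -a by simp only [β]; field_simp,
          Real.rpow_neg hm.le, hσq]
        field_simp
    _ = ↑(Ca * 5 ^ (1 + |a|) * Cb ^ (q - 1)) * ENNReal.ofReal σ ^ q := by
        rw [ENNReal.ofReal_mul (by positivity), ← ENNReal.ofReal_rpow_of_nonneg hσ.le
          (by linarith), ← ENNReal.ofReal_coe_nnreal]
        push_cast
        rfl

theorem rpow_mul_powerWeight_closedBall_le {a q : ℝ} (ha : -1 < a) (hq : 1 < q)
    (haq : a < q - 1) :
    ∃ K : ℝ≥0, ∀ g : ℝ → ℝ≥0∞, Measurable g → ∀ (x σ : ℝ), 0 < σ → ∀ c : ℝ≥0∞,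
      ENNReal.ofReal σ * c ≤ ∫⁻ η in closedBall x σ, g η →
      c ^ q * powerWeight a (closedBall x (5 * σ))
        ≤ K * ∫⁻ η in closedBall x σ, g η ^ q ∂powerWeight a := by
  obtain ⟨K, hK⟩ := powerWeight_closedBall_mul_dual_le ha hq haq
  refine ⟨K, fun g hg x σ hσ c hc => ?_⟩
  have hq0 : 0 ≤ q := by linarith
  have hHolder := rpow_lintegral_le_lintegral_rpow_mul_weight hq
    (μ := volume.restrict (closedBall x σ)) hg.aemeasurable
    (by fun_prop : Measurable fun t : ℝ => ENNReal.ofReal (|t| ^ a)).aemeasurable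
    (ae_restrict_of_ae (by filter_upwards [Measure.ae_ne volume 0] with t ht; positivity))
    (ae_of_all _ fun _ => ENNReal.ofReal_ne_top)
  rw [← setLIntegral_powerWeight a measurableSet_closedBall] at hHolder
  refine (ENNReal.mul_le_mul_iff_right (by positivity : ENNReal.ofReal σ ^ q ≠ 0)
    (ENNReal.rpow_ne_top_of_nonneg hq0 ENNReal.ofReal_ne_top)).1 ?_
  calc ENNReal.ofReal σ ^ q * (c ^ q * powerWeight a (closedBall x (5 * σ)))
      = (ENNReal.ofReal σ * c) ^ q * powerWeight a (closedBall x (5 * σ)) := by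
        rw [ENNReal.mul_rpow_of_nonneg _ _ hq0, mul_assoc]
    _ ≤ (∫⁻ η in closedBall x σ, g η ^ q ∂powerWeight a)
          * (∫⁻ t in closedBall x σ, ENNReal.ofReal (|t| ^ a) ^ (-(q - 1)⁻¹)) ^ (q - 1)
          * powerWeight a (closedBall x (5 * σ)) := by
        gcongr
        exact (ENNReal.rpow_le_rpow hc hq0).trans hHolder
    _ ≤ (∫⁻ η in closedBall x σ, g η ^ q ∂powerWeight a) * (K * ENNReal.ofReal σ ^ q) := by
        rw [mul_assoc, mul_comm (_ ^ (q - 1))]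
        exact mul_le_mul_right (hK x σ hσ) _
    _ = ENNReal.ofReal σ ^ q * (K * ∫⁻ η in closedBall x σ, g η ^ q ∂powerWeight a) := by ring

theorem powerWeight_meas_lt_maximalFunction_mul_le {a q : ℝ} (ha : -1 < a) (hq : 1 < q)
    (haq : a < q - 1) :
    ∃ C : ℝ≥0, ∀ g : ℝ → ℝ≥0∞, Measurable g → ∀ c : ℝ≥0∞,
      powerWeight a {t | c < maximalFunction g t} * c ^ q ≤ C * ∫⁻ t, g t ^ q ∂powerWeight a := by
  obtain ⟨K, hK⟩ := rpow_mul_powerWeight_closedBall_le ha hq haq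
  refine ⟨K, fun g hg c => ?_⟩
  have hball : ∀ t ∈ {t | c < maximalFunction g t}, ∃ σ > 0,
      (c ^ q • powerWeight a) (closedBall t (5 * σ))
        ≤ K * (powerWeight a).withDensity (fun η => g η ^ q) (closedBall t σ) := by
    intro t ht
    obtain ⟨σ, hσ, hlt⟩ : ∃ σ > 0,
        c < (ENNReal.ofReal (2 * σ))⁻¹ * ∫⁻ η in Ioo (t - σ) (t + σ), g η := by
      simpa only [mem_ofPred_eq, maximalFunction, lt_iSup_iff, exists_prop] using ht
    have hmass : ENNReal.ofReal σ * c ≤ ∫⁻ η in closedBall t σ, g η :=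
      calc ENNReal.ofReal σ * c
          ≤ ENNReal.ofReal (2 * σ)
              * ((ENNReal.ofReal (2 * σ))⁻¹ * ∫⁻ η in Ioo (t - σ) (t + σ), g η) := by
            gcongr
            linarith
        _ = ∫⁻ η in Ioo (t - σ) (t + σ), g η := by
            rw [← mul_assoc, ENNReal.mul_inv_cancel (by simpa using hσ) ENNReal.ofReal_ne_top,
              one_mul]
        _ ≤ ∫⁻ η in closedBall t σ, g η :=
            lintegral_mono_set (by rw [Real.closedBall_eq_Icc]; exact Ioo_subset_Icc_self)
    refine ⟨σ, hσ, ?_⟩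
    rw [Measure.smul_apply, smul_eq_mul, withDensity_apply _ measurableSet_closedBall]
    exact hK g hg t σ hσ c hmass
  have hvitali := measure_le_mul_of_forall_exists_closedBall (by norm_num) hball
  rwa [Measure.smul_apply, smul_eq_mul, withDensity_apply _ MeasurableSet.univ,
    Measure.restrict_univ, mul_comm] at hvitali

theorem powerWeight_lintegral_maximalFunction_rpow_le {p a : ℝ} (hp : 1 < p) (ha1 : -1 < a)
    (ha2 : a < p - 1) :
    ∃ C : ℝ≥0, ∀ g : ℝ → ℝ≥0∞, Measurable g →
      ∫⁻ t, maximalFunction g t ^ p ∂powerWeight a ≤ C * ∫⁻ t, g t ^ p ∂powerWeight a := by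
  obtain ⟨q, hq, haq, hqp⟩ : ∃ q, 1 < q ∧ a < q - 1 ∧ q < p := by
    have hmax : max 1 (a + 1) < p := max_lt hp (by linarith)
    refine ⟨(max 1 (a + 1) + p) / 2, ?_, ?_, ?_⟩ <;>
      linarith [le_max_left 1 (a + 1), le_max_right 1 (a + 1)]
  obtain ⟨C, hweak⟩ := powerWeight_meas_lt_maximalFunction_mul_le ha1 hq haq
  refine ⟨2 ^ p * (p / (p - q)).toNNReal * C, fun g hg => ?_⟩
  refine (lintegral_rpow_le_of_weakType (fun _ => measurable_maximalFunction)
    monotone_maximalFunction maximalFunction_add_const_le hweak (by linarith) hqp hg).trans_eq ?_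
  rw [ENNReal.coe_mul, ENNReal.coe_mul, ENNReal.coe_rpow_of_nonneg _ (by linarith),
    ENNReal.coe_ofNat]
  rfl

/-- **Muckenhoupt weighted maximal inequality for power weights** (Lemma 2.6).
If `1 < p < ∞` and `-1 < a < p - 1`, then
`‖𝓜 f‖_{L^p(ℝ,|t|^a dt)} ≤ C ‖f‖_{L^p(ℝ,|t|^a dt)}` for all `f ∈ L^p(ℝ,|t|^a dt)`. -/
theorem muckenhoupt_power_weight_maximal (p a : ℝ) (hp : 1 < p)
    (ha1 : -1 < a) (ha2 : a < p - 1) :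
    ∃ C : ℝ≥0, ∀ f : ℝ → ℝ, Measurable f →
      (∫⁻ t : ℝ, (‖f t‖₊ : ℝ≥0∞) ^ p * ENNReal.ofReal (|t| ^ a)) ≠ ∞ →
      (∫⁻ t : ℝ, maxHL f t ^ p * ENNReal.ofReal (|t| ^ a)) ^ (1 / p)
        ≤ C * (∫⁻ t : ℝ, (‖f t‖₊ : ℝ≥0∞) ^ p * ENNReal.ofReal (|t| ^ a)) ^ (1 / p) := by
  obtain ⟨C, hC⟩ := powerWeight_lintegral_maximalFunction_rpow_le hp ha1 ha2
  refine ⟨C ^ (1 / p), fun f hf _ => ?_⟩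
  rw [maxHL_eq_maximalFunction, ← lintegral_powerWeight, ← lintegral_powerWeight,
    ENNReal.coe_rpow_of_nonneg _ (by positivity), ← ENNReal.mul_rpow_of_nonneg _ _ (by positivity)]
  exact ENNReal.rpow_le_rpow (hC _ hf.nnnorm.coe_nnreal_ennreal) (by positivity)
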